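/- (Suppression law) Let G be a finite abelian group of m×m unitary monomial matrices, λ : G → ℂ∖{0} a group homomorphism, and U an m×m unitary matrix such that U g U† is a diagonal matrix for every g ∈ G. Let Ψ be a vector in the joint eigenspace V_λ^G = {w : B_n(g) w = λ(g) w for all g ∈ G}. If ν ∈ T(m,n) satisfies ∑_{g∈G} λ(g)^{−1} ∏_i ([U g U†]_{ii})^{ν(i)} = 0, then ⟨e_ν, B_n(U) Ψ⟩ = 0. -/

import Mathlib

/-!
The monomial matrices act on the occupation tuples by permutations with phases, and this makes
`B_n` multiplicative on products `A * g` with `g` monomial, while a diagonal `D` scales the row `ν`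
of `B_n(D * A)` by `∏ i, D i i ^ ν i`. For `D_g = U g U†` we have `D_g U = U g`, so the amplitude
`t = ⟨e_ν, B_n(U) Ψ⟩` satisfies `λ(g) t = (∏ i, (D_g)_ii ^ ν i) t` for every `g`. If `t ≠ 0`, every
term `λ(g)⁻¹ ∏ i, (D_g)_ii ^ ν i` of the sum in the hypothesis equals `1`, so the sum is `|G| ≠ 0`.
-/

namespace BSF

variable {α : Type*} [Fintype α] [DecidableEq α]

/-- The canonical list in which each index `i` is repeated `ν i` times. -/
noncomputable def repList (ν : α → ℕ) : List α :=
  Finset.univ.toList.flatMap fun i => List.replicate (ν i) i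

set_option linter.unusedSectionVars false in
lemma repList_length (ν : α → ℕ) : (repList ν).length = ∑ i, ν i := by
  simp [repList, List.length_flatMap]

/-- The index set `T(m,n)`: occupation-number tuples with total `n`. -/
def BosonIdx (α : Type*) [Fintype α] (n : ℕ) := {ν : α → ℕ // ∑ i, ν i = n}

instance {n : ℕ} : DecidableEq (BosonIdx α n) :=
  inferInstanceAs (DecidableEq {ν : α → ℕ // ∑ i, ν i = n})

noncomputable instance {n : ℕ} : Fintype (BosonIdx α n) :=
  Fintype.ofInjective
    (fun ν : BosonIdx α n => fun i : α =>
      (⟨ν.1 i, by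
        have h := Finset.single_le_sum (f := ν.1) (fun j _ => Nat.zero_le _) (Finset.mem_univ i)
        rw [ν.2] at h
        omega⟩ : Fin (n + 1)))
    (fun a b hab => Subtype.ext (funext fun i => congrArg Fin.val (congrFun hab i)))

/-- The permanent of a square complex matrix. -/
noncomputable def permanent {n : ℕ} (M : Matrix (Fin n) (Fin n) ℂ) : ℂ :=
  ∑ σ : Equiv.Perm (Fin n), ∏ i, M (σ i) i

/-- The canonical repetition function associated with an occupation tuple. -/
noncomputable def repFun {n : ℕ} (ν : BosonIdx α n) : Fin n → α :=
  fun k => (repList ν.1).get (Fin.cast ((repList_length ν.1).trans ν.2).symm k)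

/-- The `n`-boson representation of a matrix `S`. -/
noncomputable def bosonRep (n : ℕ) (S : Matrix α α ℂ) :
    Matrix (BosonIdx α n) (BosonIdx α n) ℂ :=
  Matrix.of fun ν ν' =>
    permanent (Matrix.of fun k l => S (repFun ν k) (repFun ν' l)) /
      (Real.sqrt ((∏ i, (ν.1 i).factorial * (ν'.1 i).factorial : ℕ) : ℝ) : ℂ)

/-- Relabeling an occupation tuple by (precomposition with) a permutation of the modes. -/
def permIdx {n : ℕ} (σ : Equiv.Perm α) (ν : BosonIdx α n) : BosonIdx α n :=
  ⟨ν.1 ∘ σ, show ∑ i, ν.1 (σ i) = n from (Equiv.sum_comp σ ν.1).trans ν.2⟩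

section Permanent

variable {ι R : Type*} [Fintype ι] [DecidableEq ι] [CommSemiring R]

lemma permanent_diagonal_mul (c : ι → R) (M : Matrix ι ι R) :
    (Matrix.diagonal c * M).permanent = (∏ i, c i) * M.permanent := by
  simp only [Matrix.permanent, Matrix.diagonal_mul, Finset.mul_sum, Finset.prod_mul_distrib]
  exact Finset.sum_congr rfl fun σ _ => by rw [Equiv.prod_comp σ c]

lemma permanent_mul_diagonal (c : ι → R) (M : Matrix ι ι R) :
    (M * Matrix.diagonal c).permanent = (∏ i, c i) * M.permanent := by
  simp only [Matrix.permanent, Matrix.mul_diagonal, Finset.mul_sum, Finset.prod_mul_distrib,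
    mul_comm]

lemma permanent_of_eq_indicator {α : Type*} [DecidableEq α] (f g : ι → α) :
    (Matrix.of fun k l => if f k = g l then (1 : R) else 0).permanent =
      Fintype.card {τ : Equiv.Perm ι // f ∘ τ = g} := by
  simp only [Matrix.permanent, Matrix.of_apply, Finset.prod_boole, Fintype.card_subtype,
    ← Finset.sum_boole, funext_iff, Function.comp_apply, Finset.mem_univ, true_implies]

end Permanent

lemma exists_perm_comp_eq_of_card_fiber_eq {ι β : Type*} [Fintype ι] [DecidableEq β]
    (f g : ι → β) (h : ∀ b, Fintype.card {k // f k = b} = Fintype.card {k // g k = b}) :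
    ∃ τ : Equiv.Perm ι, g ∘ τ = f := by
  have e : ∀ b, {k // f k = b} ≃ {k // g k = b} := fun b => Fintype.equivOfCardEq (h b)
  exact ⟨(Equiv.sigmaFiberEquiv f).symm.trans
    ((Equiv.sigmaCongrRight e).trans (Equiv.sigmaFiberEquiv g)),
    funext fun k => (e (f k) ⟨k, rfl⟩).2⟩

lemma count_repList (ν : α → ℕ) (a : α) : (repList ν).count a = ν a := by
  simp [repList, List.count_flatMap, List.count_replicate, Finset.sum_map_toList]

lemma card_repFun_fiber {n : ℕ} (ν : BosonIdx α n) (a : α) :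
    Fintype.card {k // repFun ν k = a} = ν.1 a := by
  have hv := Fin.card_filter_univ_eq_vector_get_eq_count a
    (⟨repList ν.1, (repList_length ν.1).trans ν.2⟩ : List.Vector α n)
  rw [Fintype.card_subtype, ← count_repList ν.1 a]
  exact hv

lemma prod_repFun {n : ℕ} {M : Type*} [CommMonoid M] (ν : BosonIdx α n) (h : α → M) :
    ∏ k, h (repFun ν k) = ∏ i, h i ^ ν.1 i := by
  simp [← Fintype.prod_fiberwise' (repFun ν) h, card_repFun_fiber]

lemma eq_of_repFun_comp_perm {n : ℕ} {μ κ : BosonIdx α n} (τ : Equiv.Perm (Fin n))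
    (h : repFun μ ∘ τ = repFun κ) : μ = κ := by
  refine Subtype.ext (funext fun a => ?_)
  rw [← card_repFun_fiber μ a, ← card_repFun_fiber κ a, ← h]
  exact (Fintype.card_congr (Equiv.subtypeEquiv τ fun _ => Iff.rfl)).symm

section BosonRep

lemma bosonRep_apply {n : ℕ} (S : Matrix α α ℂ) (ν ν' : BosonIdx α n) :
    bosonRep n S ν ν' = (S.submatrix (repFun ν) (repFun ν')).permanent /
      (Real.sqrt ((∏ i, (ν.1 i).factorial * (ν'.1 i).factorial : ℕ) : ℝ) : ℂ) := rfl

lemma permanent_submatrix_eq_of_card_fiber_eq {n : ℕ} {R : Type*} [CommSemiring R]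
    (A : Matrix α α R) (f g : Fin n → α) (μ : BosonIdx α n)
    (hg : ∀ a, Fintype.card {k // g k = a} = μ.1 a) :
    (A.submatrix f g).permanent = (A.submatrix f (repFun μ)).permanent := by
  obtain ⟨τ, hτ⟩ := exists_perm_comp_eq_of_card_fiber_eq g (repFun μ)
    fun a => by rw [hg, card_repFun_fiber]
  rw [← hτ]
  exact Matrix.permanent_permute_rows τ (A.submatrix f (repFun μ))

lemma card_fiber_perm_repFun {n : ℕ} (π : Equiv.Perm α) (ν : BosonIdx α n) (a : α) :
    Fintype.card {k // (π ∘ repFun ν) k = a} = (permIdx π⁻¹ ν).1 a := by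
  have hfib : ∀ k, (π ∘ repFun ν) k = a ↔ repFun ν k = π⁻¹ a :=
    fun _ => Equiv.Perm.eq_inv_iff_eq.symm
  rw [Fintype.card_congr (Equiv.subtypeEquivRight hfib), card_repFun_fiber]
  rfl

variable {π : Equiv.Perm α} {d : α → ℂ}

lemma mul_monomial_apply {S : Matrix α α ℂ} (hS : ∀ i j, S j i = if j = π i then d i else 0)
    (A : Matrix α α ℂ) (x y : α) : (A * S) x y = A x (π y) * d y := by
  simp [Matrix.mul_apply, hS]

lemma bosonRep_mul_monomial_apply {n : ℕ} {S : Matrix α α ℂ}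
    (hS : ∀ i j, S j i = if j = π i then d i else 0) (A : Matrix α α ℂ) (ν ν' : BosonIdx α n) :
    bosonRep n (A * S) ν ν' = (∏ i, d i ^ ν'.1 i) * bosonRep n A ν (permIdx π⁻¹ ν') := by
  have hsub : (A * S).submatrix (repFun ν) (repFun ν') =
      A.submatrix (repFun ν) (π ∘ repFun ν') * Matrix.diagonal (d ∘ repFun ν') := by
    ext k l
    simp [Matrix.mul_diagonal, mul_monomial_apply hS]
  have hfact : (∏ i, (ν.1 i).factorial * ((permIdx π⁻¹ ν').1 i).factorial) =
      ∏ i, (ν.1 i).factorial * (ν'.1 i).factorial := by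
    simp only [Finset.prod_mul_distrib, permIdx, Function.comp_apply,
      Equiv.prod_comp π⁻¹ fun i => (ν'.1 i).factorial]
  rw [bosonRep_apply, bosonRep_apply, hsub, permanent_mul_diagonal, hfact,
    permanent_submatrix_eq_of_card_fiber_eq A _ _ (permIdx π⁻¹ ν')
      (card_fiber_perm_repFun π ν'), Function.comp_def d, prod_repFun ν' d, mul_div_assoc]

lemma bosonRep_one {n : ℕ} : bosonRep n (1 : Matrix α α ℂ) = 1 := by
  ext μ κ
  have hsub : (1 : Matrix α α ℂ).submatrix (repFun μ) (repFun κ) =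
      Matrix.of fun k l => if repFun μ k = repFun κ l then 1 else 0 := by
    ext k l
    simp [Matrix.one_apply]
  rw [bosonRep_apply, hsub, permanent_of_eq_indicator]
  by_cases h : μ = κ
  · subst h
    -- the stabilizer of `repFun μ` has order `∏ i, (μ i)!`, which cancels the normalization
    have hfact : ((∏ i, (μ.1 i).factorial * (μ.1 i).factorial : ℕ) : ℝ) =
        ((∏ i, (μ.1 i).factorial : ℕ) : ℝ) ^ 2 := by
      push_cast
      rw [← Finset.prod_pow]
      simp only [sq]
    have hne : ((∏ i, (μ.1 i).factorial : ℕ) : ℂ) ≠ 0 :=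
      Nat.cast_ne_zero.mpr (Finset.prod_ne_zero_iff.mpr fun i _ => Nat.factorial_ne_zero _)
    rw [DomMulAct.stabilizer_card, hfact, Real.sqrt_sq (by positivity), Matrix.one_apply_eq]
    simp only [card_repFun_fiber]
    push_cast at hne ⊢
    exact div_self hne
  · have : IsEmpty {τ : Equiv.Perm (Fin n) // repFun μ ∘ τ = repFun κ} :=
      ⟨fun τ => h (eq_of_repFun_comp_perm τ.1 τ.2)⟩
    simp [Matrix.one_apply_ne h]

lemma bosonRep_monomial_apply {n : ℕ} {S : Matrix α α ℂ}
    (hS : ∀ i j, S j i = if j = π i then d i else 0) (μ ν' : BosonIdx α n) :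
    bosonRep n S μ ν' = if μ = permIdx π⁻¹ ν' then ∏ i, d i ^ ν'.1 i else 0 := by
  rw [← one_mul S, bosonRep_mul_monomial_apply hS, bosonRep_one, Matrix.one_apply]
  split_ifs <;> simp

lemma bosonRep_mul_monomial {n : ℕ} {S : Matrix α α ℂ}
    (hS : ∀ i j, S j i = if j = π i then d i else 0) (A : Matrix α α ℂ) :
    bosonRep n (A * S) = bosonRep n A * bosonRep n S := by
  ext ν ν'
  simp only [Matrix.mul_apply, bosonRep_mul_monomial_apply hS, bosonRep_monomial_apply hS,
    mul_ite, mul_zero, Finset.sum_ite_eq', Finset.mem_univ, if_true]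
  ring

lemma bosonRep_diagonal_mul_apply {n : ℕ} {D : Matrix α α ℂ} (hD : D.IsDiag)
    (A : Matrix α α ℂ) (ν ν' : BosonIdx α n) :
    bosonRep n (D * A) ν ν' = (∏ i, D i i ^ ν.1 i) * bosonRep n A ν ν' := by
  have hsub : (D * A).submatrix (repFun ν) (repFun ν') =
      Matrix.diagonal (fun k => D (repFun ν k) (repFun ν k)) *
        A.submatrix (repFun ν) (repFun ν') := by
    nth_rewrite 1 [← hD.diagonal_diag]
    ext k l
    simp [Matrix.diagonal_mul]
  rw [bosonRep_apply, bosonRep_apply, hsub, permanent_diagonal_mul,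
    prod_repFun ν fun i => D i i, mul_div_assoc]

lemma mul_bosonRep_mulVec_apply_of_mul_eq {n : ℕ} {U S D : Matrix α α ℂ}
    (hS : ∀ i j, S j i = if j = π i then d i else 0) (hD : D.IsDiag) (hDU : D * U = U * S)
    {c : ℂ} {Ψ : BosonIdx α n → ℂ} (hΨ : (bosonRep n S).mulVec Ψ = c • Ψ) (ν : BosonIdx α n) :
    c * (bosonRep n U).mulVec Ψ ν = (∏ i, D i i ^ ν.1 i) * (bosonRep n U).mulVec Ψ ν :=
  calc c * (bosonRep n U).mulVec Ψ ν = (bosonRep n (U * S)).mulVec Ψ ν := by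
        rw [bosonRep_mul_monomial hS, ← Matrix.mulVec_mulVec, hΨ, Matrix.mulVec_smul,
          Pi.smul_apply, smul_eq_mul]
    _ = (bosonRep n (D * U)).mulVec Ψ ν := by rw [hDU]
    _ = (∏ i, D i i ^ ν.1 i) * (bosonRep n U).mulVec Ψ ν := by
        simp only [Matrix.mulVec, dotProduct, bosonRep_diagonal_mul_apply hD, mul_assoc,
          ← Finset.mul_sum]

end BosonRep

lemma eq_zero_of_forall_mul_eq_of_sum_inv_mul_eq_zero {ι K : Type*} [Fintype ι] [Nonempty ι]
    [Field K] [CharZero K] {a b : ι → K} {t : K} (ha : ∀ i, a i ≠ 0)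
    (hab : ∀ i, a i * t = b i * t) (hsum : ∑ i, (a i)⁻¹ * b i = 0) : t = 0 := by
  by_contra ht
  have hb : ∀ i, (a i)⁻¹ * b i = 1 := fun i => by
    rw [← mul_right_cancel₀ ht (hab i), inv_mul_cancel₀ (ha i)]
  simp [hb, Fintype.card_ne_zero] at hsum

theorem suppression_law_general {m n : ℕ}
    {G : Type*} [CommGroup G] [Fintype G]
    (ρ : G →* Matrix (Fin m) (Fin m) ℂ)
    -- each `ρ g` is a unitary monomial matrix:
    (hmono : ∀ g : G, ∃ (π : Equiv.Perm (Fin m)) (d : Fin m → ℂ),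
      (∀ i, ‖d i‖ = 1) ∧ ∀ i j, ρ g j i = if j = π i then d i else 0)
    (lam : G →* ℂˣ)
    (U : Matrix (Fin m) (Fin m) ℂ) (hU : U ∈ Matrix.unitaryGroup (Fin m) ℂ)
    (hdiag : ∀ g : G, (U * ρ g * U.conjTranspose).IsDiag)
    (Ψ : BosonIdx (Fin m) n → ℂ)
    (hΨ : ∀ g : G, (bosonRep n (ρ g)).mulVec Ψ = (lam g : ℂ) • Ψ)
    (ν : BosonIdx (Fin m) n)
    (hν : ∑ g : G, ((lam g : ℂ))⁻¹ * ∏ i, ((U * ρ g * U.conjTranspose) i i) ^ ν.1 i = 0) :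
    ∑ μ : BosonIdx (Fin m) n,
      (starRingEnd ℂ) ((Pi.single ν (1 : ℂ) : BosonIdx (Fin m) n → ℂ) μ) *
        ((bosonRep n U).mulVec Ψ) μ = 0 := by
  have hUU : U.conjTranspose * U = 1 := Matrix.mem_unitaryGroup_iff'.mp hU
  simp only [Pi.single_apply, MonoidWithZeroHom.map_ite_one_zero, ite_mul, one_mul, zero_mul,
    Finset.sum_ite_eq', Finset.mem_univ, ↓reduceIte]
  refine eq_zero_of_forall_mul_eq_of_sum_inv_mul_eq_zero (fun g => (lam g).ne_zero)
    (fun g => ?_) hν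
  obtain ⟨π, d, -, hS⟩ := hmono g
  exact mul_bosonRep_mulVec_apply_of_mul_eq hS (hdiag g)
    (by rw [Matrix.mul_assoc, hUU, Matrix.mul_one]) (hΨ g) ν

/-- Suppression law, Corollary 1 of the paper. If an LOC `U` simultaneously
diagonalizes a finite abelian group `G` of unitary monomial matrices, the input state `Ψ` lies
in the joint eigenspace `V_λ^G`, and the outcome `ν` satisfies
`∑ g, λ(g)⁻¹ ∏ i, ([U g U†]_{ii})^{ν i} = 0`, then `⟨e_ν, B_n(U) Ψ⟩ = 0`. -/
theorem suppression_law {m n : ℕ} (hn : 0 < n)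
    {G : Type*} [CommGroup G] [Fintype G]
    (ρ : G →* Matrix (Fin m) (Fin m) ℂ)
    -- each `ρ g` is a unitary monomial matrix:
    (hmono : ∀ g : G, ∃ (π : Equiv.Perm (Fin m)) (d : Fin m → ℂ),
      (∀ i, ‖d i‖ = 1) ∧ ∀ i j, ρ g j i = if j = π i then d i else 0)
    (lam : G →* ℂˣ)
    (U : Matrix (Fin m) (Fin m) ℂ) (hU : U ∈ Matrix.unitaryGroup (Fin m) ℂ)
    (hdiag : ∀ g : G, (U * ρ g * U.conjTranspose).IsDiag)
    (Ψ : BosonIdx (Fin m) n → ℂ)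
    (hΨ : ∀ g : G, (bosonRep n (ρ g)).mulVec Ψ = (lam g : ℂ) • Ψ)
    (ν : BosonIdx (Fin m) n)
    (hν : ∑ g : G, ((lam g : ℂ))⁻¹ * ∏ i, ((U * ρ g * U.conjTranspose) i i) ^ ν.1 i = 0) :
    ∑ μ : BosonIdx (Fin m) n,
      (starRingEnd ℂ) ((Pi.single ν (1 : ℂ) : BosonIdx (Fin m) n → ℂ) μ) *
        ((bosonRep n U).mulVec Ψ) μ = 0 :=
  suppression_law_general ρ hmono lam U hU hdiag Ψ hΨ ν hν

end BSF
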